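/- arXiv:2101.12631 — 2 statements merged into one kernel-verified Lean document; each statement's English description precedes it below -/
import Mathlib

section
/- Let p be a point in a metric space, C a finite set of points not containing p, N ⊆ C, and m ∈ C \ N a point such that every n ∈ N satisfies dist(p,n) < dist(p,m). Then the following two conditions are equivalent: (Condition 1) for all n ∈ N, dist(m,n) ≥ dist(m,p); (Condition 2) lune(p,m) ∩ C = ∅, or every u ∈ lune(p,m) ∩ C satisfies u ∉ N. Here lune(p,m) = B(p, dist(p,m)) ∩ B(m, dist(m,p)) with B the open ball. -/
open Metric

theorem Set.eq_empty_or_forall_notMem_inter_iff {α : Type*} {S C N : Set α} (hNC : N ⊆ C) :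
    (S ∩ C = ∅ ∨ ∀ u ∈ S ∩ C, u ∉ N) ↔ ∀ n ∈ N, n ∉ S := by
  refine ⟨fun h n hn hnS => ?_, fun h => Or.inr fun u hu huN => h u huN hu.1⟩
  rcases h with hempty | hout
  · exact hempty.subset ⟨hnS, hNC hn⟩
  · exact hout n ⟨hnS, hNC hn⟩ hn

theorem mem_lune_iff_of_dist_lt {α : Type*} [PseudoMetricSpace α] {p m n : α}
    (h : dist p n < dist p m) :
    n ∈ ball p (dist p m) ∩ ball m (dist m p) ↔ dist m n < dist m p := by
  simp only [Set.mem_inter_iff, mem_ball', h, true_and]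

theorem hnsw_nsg_equiv_general {α : Type*} [MetricSpace α] (p : α) (C N : Set α)
    (hNC : N ⊆ C) (m : α)
    (hclose : ∀ n ∈ N, dist p n < dist p m) :
    (∀ n ∈ N, dist m n ≥ dist m p) ↔
      ((Metric.ball p (dist p m) ∩ Metric.ball m (dist m p)) ∩ C = ∅ ∨
        ∀ u ∈ (Metric.ball p (dist p m) ∩ Metric.ball m (dist m p)) ∩ C,
          u ∉ N) := by
  rw [Set.eq_empty_or_forall_notMem_inter_iff hNC]
  refine forall₂_congr fun n hn => ?_
  rw [mem_lune_iff_of_dist_lt (hclose n hn), not_lt, ge_iff_le]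

theorem hnsw_nsg_equiv {α : Type*} [MetricSpace α] (p : α) (C N : Set α)
    (hC : C.Finite) (hp : p ∉ C) (hNC : N ⊆ C) (m : α) (hm : m ∈ C \ N)
    (hclose : ∀ n ∈ N, dist p n < dist p m) :
    (∀ n ∈ N, dist m n ≥ dist m p) ↔
      ((Metric.ball p (dist p m) ∩ Metric.ball m (dist m p)) ∩ C = ∅ ∨
        ∀ u ∈ (Metric.ball p (dist p m) ∩ Metric.ball m (dist m p)) ∩ C,
          u ∉ N) :=
  hnsw_nsg_equiv_general p C N hNC m hclose
end

section
/- Let p, x, y be points in a Euclidean space with dist(p,x) < dist(p,y), x ≠ p, y ≠ p. If x ∉ lune(p,y), then the angle ∠xpy at vertex p satisfies ∠xpy ≥ π/3, where lune(p,y) = B(p, dist(p,y)) ∩ B(y, dist(y,p)) with B the open ball. -/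
open EuclideanGeometry Real Metric

section

variable {V P : Type*} [NormedAddCommGroup V] [InnerProductSpace ℝ V] [MetricSpace P]
  [NormedAddTorsor V P]

theorem EuclideanGeometry.pi_div_three_le_angle_iff_cos_le {p₁ p₂ p₃ : P} :
    π / 3 ≤ ∠ p₁ p₂ p₃ ↔ cos (∠ p₁ p₂ p₃) ≤ 1 / 2 := by
  rw [← cos_pi_div_three]
  exact (strictAntiOn_cos.le_iff_ge ⟨angle_nonneg _ _ _, angle_le_pi _ _ _⟩
    ⟨by positivity, by linarith [pi_pos]⟩).symm

theorem EuclideanGeometry.pi_div_three_le_angle_of_dist_le {p x y : P}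
    (hx : dist p x ≤ dist x y) (hy : dist p y ≤ dist x y) : π / 3 ≤ ∠ x p y := by
  rcases eq_or_ne x p with rfl | hxp
  · rw [angle_self_left]; linarith [pi_pos]
  rcases eq_or_ne y p with rfl | hyp
  · rw [angle_self_right]; linarith [pi_pos]
  rw [pi_div_three_le_angle_iff_cos_le]
  have hpx : 0 < dist p x := dist_pos.2 hxp.symm
  have hpy : 0 < dist p y := dist_pos.2 hyp.symm
  have hcos := dist_sq_eq_dist_sq_add_dist_sq_sub_two_mul_dist_mul_dist_mul_cos_angle x p y
  rw [dist_comm x p, dist_comm y p] at hcos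
  -- `2·|px|·|py|·cos ∠xpy = |px|² + |py|² - |xy|² ≤ min(|px|, |py|)² ≤ |px|·|py|`
  nlinarith [mul_pos hpx hpy]

end

def Metric.lune {α : Type*} [PseudoMetricSpace α] (p y : α) : Set α :=
  ball p (dist p y) ∩ ball y (dist y p)

theorem Metric.dist_le_dist_of_notMem_lune {α : Type*} [PseudoMetricSpace α] {p x y : α}
    (hlt : dist p x < dist p y) (hx : x ∉ lune p y) : dist p y ≤ dist x y := by
  by_contra! h
  exact hx ⟨by rwa [mem_ball, dist_comm], by rwa [mem_ball, dist_comm y p]⟩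

theorem angle_ge_of_not_mem_lune_general {d : ℕ} (p x y : EuclideanSpace ℝ (Fin d))
    (hlt : dist p x < dist p y)
    (hlune : x ∉ Metric.ball p (dist p y) ∩ Metric.ball y (dist y p)) :
    EuclideanGeometry.angle x p y ≥ Real.pi / 3 := by
  have hxy : dist p y ≤ dist x y := dist_le_dist_of_notMem_lune hlt hlune
  exact pi_div_three_le_angle_of_dist_le (hlt.le.trans hxy) hxy

theorem angle_ge_of_not_mem_lune {d : ℕ} (p x y : EuclideanSpace ℝ (Fin d))
    (hlt : dist p x < dist p y) (hx : x ≠ p) (hy : y ≠ p)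
    (hlune : x ∉ Metric.ball p (dist p y) ∩ Metric.ball y (dist y p)) :
    EuclideanGeometry.angle x p y ≥ Real.pi / 3 :=
  angle_ge_of_not_mem_lune_general p x y hlt hlune
end
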